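/- arXiv:1905.08747 — 2 statements merged into one kernel-verified Lean document; each statement's English description precedes it below -/
import Mathlib

section
/- Let L ⊆ ℤ^m be a lattice, let i, j ∈ {1, …, m} with i ≠ j, and set c := e_j − e_i (so [c] is a slanted edge of the corner cone C_i and [−c] is a slanted edge of the corner cone C_j). If ℓ ∈ L and α ∈ ℕ are such that ℓ + α·c ∈ C_i, then there exists β ∈ ℕ with β ≥ 1 such that ℓ − β·c ∈ C_j and ℓ − β·c ≠ 0. -/
/-- The cone generated by the vectors `c 1, …, c n`: all `ℕ`-linear combinations. -/
def coneGen {m n : ℕ} (c : Fin n → (Fin m → ℤ)) : Set (Fin m → ℤ) :=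
  { v | ∃ β : Fin n → ℕ, v = ∑ j, (β j : ℤ) • c j }

/-- `stdVec m 0 = e_0 = 0` and `stdVec m i = e_i` (the `i`-th standard unit vector)
for `i ∈ {1, …, m}`. -/
def stdVec (m : ℕ) (i : Fin (m + 1)) : Fin m → ℤ :=
  fun j => if (j : ℕ) + 1 = (i : ℕ) then 1 else 0

/-- The `i`-th corner cone `C_i = [e_0 - e_i, e_1 - e_i, …, e_m - e_i]` of the
standard simplex. -/
def cornerCone (m : ℕ) (i : Fin (m + 1)) : Set (Fin m → ℤ) :=
  coneGen (fun k : Fin (m + 1) => stdVec m k - stdVec m i)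

lemma stdVec_succ_apply (m : ℕ) (i : Fin m) (k : Fin m) :
    stdVec m i.succ k = if k = i then 1 else 0 := by
  simp [stdVec, Fin.val_succ, Fin.ext_iff]

lemma sum_eval (m : ℕ) (i : Fin m) (β : Fin (m+1) → ℕ) (k : Fin m) :
    (∑ t, (β t : ℤ) • (stdVec m t - stdVec m i.succ)) k
      = (β k.succ : ℤ) - (if k = i then (∑ t, (β t : ℤ)) else 0) := by
  have h1 : (∑ t, (β t : ℤ) • (stdVec m t - stdVec m i.succ)) k
      = ∑ t, (β t : ℤ) * (stdVec m t k - stdVec m i.succ k) := by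
    simp [Finset.sum_apply]
  rw [h1]
  simp only [mul_sub, Finset.sum_sub_distrib]
  congr 1
  · have : ∀ t : Fin (m+1), (β t : ℤ) * stdVec m t k
        = if k.succ = t then (β t : ℤ) else 0 := by
      intro t
      simp only [stdVec]
      by_cases ht : (k : ℕ) + 1 = (t : ℕ)
      · rw [if_pos ht, if_pos (by rw [Fin.ext_iff, Fin.val_succ]; exact ht), mul_one]
      · rw [if_neg ht, if_neg (by rw [Fin.ext_iff, Fin.val_succ]; exact ht), mul_zero]
    simp [this]
  · rw [stdVec_succ_apply]
    by_cases hk : k = i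
    · simp [hk, Finset.sum_mul]
    · simp [hk]

lemma mem_cornerCone_iff (m : ℕ) (i : Fin m) (v : Fin m → ℤ) :
    v ∈ cornerCone m i.succ ↔ (∀ k, k ≠ i → 0 ≤ v k) ∧ ∑ k, v k ≤ 0 := by
  constructor
  · rintro ⟨β, rfl⟩
    constructor
    · intro k hk
      rw [sum_eval, if_neg hk]
      simp
    · have h3 : ∑ k, (∑ t, (β t : ℤ) • (stdVec m t - stdVec m i.succ)) k
          = ∑ k, ((β k.succ : ℤ) - (if k = i then (∑ t, (β t : ℤ)) else 0)) :=
        Finset.sum_congr rfl fun k _ => sum_eval m i β k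
      rw [h3, Finset.sum_sub_distrib]
      have h4 : ∑ k : Fin m, (if k = i then (∑ t, (β t : ℤ)) else 0)
          = ∑ t, (β t : ℤ) := by simp
      rw [h4, Fin.sum_univ_succ]
      have : (0 : ℤ) ≤ (β 0 : ℤ) := Nat.cast_nonneg _
      linarith
  · rintro ⟨h1, h2⟩
    refine ⟨fun t => Fin.cases ((-∑ k, v k).toNat) (fun k => if k = i then 0 else (v k).toNat) t, ?_⟩
    funext k
    rw [sum_eval]
    have hsum : (∑ t, ((Fin.cases ((-∑ k, v k).toNat)
        (fun k => if k = i then 0 else (v k).toNat) t : ℕ) : ℤ))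
        = (-∑ k, v k) + ∑ k, (if k = i then 0 else v k) := by
      rw [Fin.sum_univ_succ]
      simp only [Fin.cases_zero, Fin.cases_succ]
      rw [Int.toNat_of_nonneg (by linarith)]
      congr 1
      refine Finset.sum_congr rfl fun k _ => ?_
      by_cases hk : k = i
      · simp [hk]
      · simp [hk, Int.toNat_of_nonneg (h1 k hk)]
    by_cases hk : k = i
    · subst hk
      rw [if_pos rfl, hsum]
      simp only [Fin.cases_succ, if_pos rfl]
      have : ∑ k', (if k' = k then 0 else v k') = (∑ k', v k') - v k := by
        have heach : ∀ k' : Fin m, (if k' = k then 0 else v k')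
            = v k' - (if k' = k then v k' else 0) := by
          intro k'; by_cases hk' : k' = k <;> simp [hk']
        rw [Finset.sum_congr rfl fun k' _ => heach k', Finset.sum_sub_distrib]
        simp
      rw [this]; push_cast; ring
    · rw [if_neg hk]
      simp [Fin.cases_succ, hk, Int.toNat_of_nonneg (h1 k hk)]

theorem stmt_13 {m : ℕ} (L : AddSubgroup (Fin m → ℤ)) (i j : Fin m) (hij : i ≠ j)
    (ℓ : Fin m → ℤ) (hℓ : ℓ ∈ L) (α : ℕ)
    (h : ℓ + (α : ℤ) • (stdVec m j.succ - stdVec m i.succ) ∈ cornerCone m i.succ) :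
    ∃ β : ℕ, 1 ≤ β ∧
      ℓ - (β : ℤ) • (stdVec m j.succ - stdVec m i.succ) ∈ cornerCone m j.succ ∧
      ℓ - (β : ℤ) • (stdVec m j.succ - stdVec m i.succ) ≠ 0 := by
  obtain ⟨h1, h2⟩ := (mem_cornerCone_iff m i _).mp h
  set c : Fin m → ℤ := stdVec m j.succ - stdVec m i.succ with hc
  have hck : ∀ k : Fin m, c k = (if k = j then 1 else 0) - (if k = i then 1 else 0) := by
    intro k; simp [hc, stdVec_succ_apply]
  have hsumc : ∑ k, c k = 0 := by
    simp [hck, Finset.sum_sub_distrib]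
  have hsumℓ : ∑ k, ℓ k ≤ 0 := by
    have he : ∑ k, (ℓ + (α : ℤ) • c) k = (∑ k, ℓ k) + (α : ℤ) * ∑ k, c k := by
      simp [Finset.sum_add_distrib, Finset.mul_sum]
    rw [he, hsumc, mul_zero, add_zero] at h2
    exact h2
  have hpos : ∀ k : Fin m, k ≠ i → k ≠ j → 0 ≤ ℓ k := by
    intro k hki hkj
    have := h1 k hki
    simpa [hck k, hki, hkj] using this
  refine ⟨((-ℓ i).toNat ⊔ (ℓ j + 1).toNat) ⊔ 1, le_max_right _ _, ?_, ?_⟩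
  · set β : ℕ := ((-ℓ i).toNat ⊔ (ℓ j + 1).toNat) ⊔ 1 with hβ
    have hβi : -ℓ i ≤ (β : ℤ) := by
      calc -ℓ i ≤ ((-ℓ i).toNat : ℤ) := Int.self_le_toNat _
        _ ≤ (β : ℤ) := by
          exact_mod_cast le_trans (le_max_left _ _) (le_max_left _ _)
    refine (mem_cornerCone_iff m j _).mpr ⟨?_, ?_⟩
    · intro k hkj
      by_cases hki : k = i
      · subst hki
        have hcval : c k = -1 := by simp [hck k, hkj]
        simp only [Pi.sub_apply, Pi.smul_apply, smul_eq_mul, hcval]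
        linarith
      · have := hpos k hki hkj
        have hcval : c k = 0 := by simp [hck k, hki, hkj]
        simp only [Pi.sub_apply, Pi.smul_apply, smul_eq_mul, hcval]
        linarith
    · have he : ∑ k, (ℓ - (β : ℤ) • c) k = (∑ k, ℓ k) - (β : ℤ) * ∑ k, c k := by
        simp [Finset.sum_sub_distrib, Finset.mul_sum]
      rw [he, hsumc, mul_zero, sub_zero]
      exact hsumℓ
  · set β : ℕ := ((-ℓ i).toNat ⊔ (ℓ j + 1).toNat) ⊔ 1 with hβ
    have hβj : ℓ j + 1 ≤ (β : ℤ) := by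
      calc ℓ j + 1 ≤ ((ℓ j + 1).toNat : ℤ) := Int.self_le_toNat _
        _ ≤ (β : ℤ) := by
          exact_mod_cast le_trans (le_max_right _ _) (le_max_left _ _)
    intro h0
    have := congrFun h0 j
    have hcval : c j = 1 := by simp [hck j, Ne.symm hij]
    simp only [Pi.sub_apply, Pi.smul_apply, smul_eq_mul, hcval, mul_one,
      Pi.zero_apply] at this
    linarith
end

section
/- For every d ∈ ℕ, the set of integer points of the dilated standard simplex equals the intersection of the translated corner cones: {v ∈ ℤ^m : v_1, …, v_m ≥ 0 and v_1 + ⋯ + v_m ≤ d} = ⋂_{i=0}^{m} (d·e_i + C_i), where d·e_i + C_i = {d·e_i + w : w ∈ C_i}. -/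
/-- The integer points of the `d`-dilated standard simplex `dS`. -/
def simplexPts (m : ℕ) (d : ℕ) : Set (Fin m → ℤ) :=
  { v | (∀ j, 0 ≤ v j) ∧ ∑ j, v j ≤ (d : ℤ) }

lemma stdVec_apply {m : ℕ} (k : Fin (m+1)) (j : Fin m) :
    stdVec m k j = if j.succ = k then 1 else 0 := by
  simp [stdVec, Fin.ext_iff]

lemma sum_beta_stdVec {m : ℕ} (β : Fin (m+1) → ℕ) (j : Fin m) :
    ∑ k, (β k : ℤ) * stdVec m k j = β j.succ := by
  simp only [stdVec_apply, mul_ite, mul_one, mul_zero]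
  rw [Finset.sum_ite_eq]
  simp

lemma sum_stdVec {m : ℕ} (i : Fin (m+1)) :
    ∑ j, stdVec m i j = if (i : ℕ) = 0 then 0 else 1 := by
  induction i using Fin.cases with
  | zero =>
    simp only [stdVec_apply]
    rw [Finset.sum_eq_zero] <;> simp [Fin.succ_ne_zero]
  | succ k =>
    simp only [stdVec_apply]
    simp only [Fin.succ_inj]
    rw [Finset.sum_ite_eq' Finset.univ k fun _ => (1:ℤ)]
    simp [Fin.succ_ne_zero]

lemma cone_coord {m : ℕ} (β : Fin (m+1) → ℕ) (i : Fin (m+1)) (j : Fin m) :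
    (∑ k, (β k : ℤ) • (stdVec m k - stdVec m i)) j
      = (β j.succ : ℤ) - stdVec m i j * ∑ k, (β k : ℤ) := by
  simp only [Finset.sum_apply, Pi.smul_apply, Pi.sub_apply, smul_eq_mul, mul_sub]
  rw [Finset.sum_sub_distrib, sum_beta_stdVec]
  rw [Finset.mul_sum]
  congr 1
  exact Finset.sum_congr rfl fun k _ => mul_comm _ _

theorem stmt_15 {m : ℕ} (d : ℕ) :
    simplexPts m d =
      ⋂ i : Fin (m + 1), {v | ∃ w ∈ cornerCone m i, v = (d : ℤ) • stdVec m i + w} := by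
  ext v
  simp only [Set.mem_iInter, Set.mem_setOf_eq, simplexPts, cornerCone, coneGen]
  constructor
  · rintro ⟨hnn, hsum⟩ i
    set β : Fin (m+1) → ℕ :=
      Fin.cases (((d:ℤ) - ∑ j, v j).toNat) (fun j => (v j).toNat) with hβ
    have hb0 : (β 0 : ℤ) = (d:ℤ) - ∑ j, v j := by
      simp [hβ, Int.toNat_of_nonneg (by linarith : (0:ℤ) ≤ (d:ℤ) - ∑ j, v j)]
    have hbs : ∀ j, (β j.succ : ℤ) = v j := fun j => by
      simp [hβ, Int.toNat_of_nonneg (hnn j)]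
    have hβsum : ∑ k, (β k : ℤ) = d := by
      rw [Fin.sum_univ_succ, hb0]
      simp only [hbs]; ring
    refine ⟨∑ k, (β k:ℤ) • (stdVec m k - stdVec m i), ⟨β, rfl⟩, ?_⟩
    funext j
    rw [Pi.add_apply, cone_coord, hβsum, hbs, Pi.smul_apply, smul_eq_mul]
    ring
  · intro h
    have hnn : ∀ j, 0 ≤ v j := by
      intro j
      obtain ⟨w, ⟨β, rfl⟩, hv⟩ := h 0
      have hj := congrFun hv j
      rw [Pi.add_apply, Pi.smul_apply, smul_eq_mul, cone_coord] at hj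
      have h0 : stdVec m 0 j = 0 := by simp [stdVec]
      rw [h0] at hj
      simp only [mul_zero, zero_mul, sub_zero, add_zero, zero_add] at hj
      rw [hj]; positivity
    refine ⟨hnn, ?_⟩
    rcases Nat.eq_zero_or_pos m with hm | hm
    · subst hm; simp
    · set i : Fin (m+1) := ⟨1, by omega⟩ with hi
      obtain ⟨w, ⟨β, rfl⟩, hv⟩ := h i
      have hv' : ∀ j, v j = (d:ℤ) * stdVec m i j +
          ((β j.succ : ℤ) - stdVec m i j * ∑ k, (β k:ℤ)) := fun j => by
        have := congrFun hv j
        rwa [Pi.add_apply, Pi.smul_apply, smul_eq_mul, cone_coord] at this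
      have hsum : ∑ j, v j = (d:ℤ) * (∑ j, stdVec m i j) +
          ((∑ j : Fin m, (β j.succ:ℤ)) - (∑ j, stdVec m i j) * ∑ k, (β k:ℤ)) := by
        simp only [hv']
        rw [Finset.sum_add_distrib, Finset.sum_sub_distrib, ← Finset.mul_sum,
          ← Finset.sum_mul]
      have hs1 : ∑ j, stdVec m i j = 1 := by
        rw [sum_stdVec]; simp [hi]
      have htot : ∑ k, (β k : ℤ) = (β 0 : ℤ) + ∑ j : Fin m, (β j.succ : ℤ) :=
        Fin.sum_univ_succ _
      have hb0 : (0:ℤ) ≤ (β 0 : ℤ) := by positivity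
      rw [hs1, htot] at hsum
      linarith
end
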